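/- (Multivariate Faà di Bruno via cumulant polynomials) If Y = (Y_1, ..., Y_n) has joint cumulants represented by the tuple (κ_1, ..., κ_n), and X_1, ..., X_n have cgf's K_{X_1}, ..., K_{X_n}, then ∑_{i > 0} E[C_{i,(X_1,...,X_n)}(κ_1, ..., κ_n)] z^i/i! = K_Y(K_{X_1}(z), ..., K_{X_n}(z)), i.e., the coefficients of the composition of the formal power series K_Y with the delta series K_{X_j} are given by evaluating the multivariable cumulant polynomials at the joint-cumulant symbols of Y. -/

import Mathlib

open scoped BigOperators

noncomputable section

abbrev MIdx (d : ℕ) := Fin d →₀ ℕ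

def mifact {d : ℕ} (i : MIdx d) : ℕ := ∏ k, (i k).factorial

def partFact {d : ℕ} (l : Multiset (MIdx d)) : ℕ := (l.map mifact).prod

def multFact {d : ℕ} (l : Multiset (MIdx d)) : ℕ :=
  ∏ x ∈ l.toFinset, (l.count x).factorial

/-- The cumulant generating series `K_X(z) = ∑_{i>0} c_i z^i/i!`. -/
def Kof {d : ℕ} (c : MIdx d → ℝ) : MvPowerSeries (Fin d) ℝ :=
  fun i => if i = 0 then 0 else c i / (mifact i : ℝ)

def degB {d : ℕ} (i : MIdx d) : ℕ := i.sum fun _ m => m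

/-- The composition `K_Y(K_1(z), …, K_n(z)) = ∑_{k>0} c_k(Y)/k! ∏_j K_j(z)^{k_j}` of the
formal power series `K_Y` (with coefficient sequence `cY`) with the delta series `K j`;
at the coefficient of `z^i` only multi-indices `k` with `|k| ≤ |i|` contribute. -/
def compSeries {n d : ℕ} (cY : (Fin n →₀ ℕ) → ℝ)
    (K : Fin n → MvPowerSeries (Fin d) ℝ) : MvPowerSeries (Fin d) ℝ :=
  fun i => ∑ k ∈ Finset.Iic (Finsupp.equivFunOnFinite.symm fun _ : Fin n => degB i),
    (if k = 0 then 0 else cY k / (∏ j, ((k j).factorial : ℝ))) *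
      MvPowerSeries.coeff i (∏ j, (K j) ^ (k j))

/-!
By the multinomial theorem, the coefficient of `z^t` in `φ^m`, for a series `φ` without constant
term, is a sum over the multisets `l` of `m` nonzero multi-indices with sum `t` of the number of
orderings of `l` times `∏_{x ∈ l} coeff x φ`; that number is `m! / ∏_x (count x l)!`. Expanding
each `∏_j K_{X_j}^{k_j}` this way, the `k_j!` cancel against the `1 / k!` of `K_Y`, the
`1 / x!` of the `K_{X_j}` give the factor `1 / partFact`, and grouping the tuples of multisets
in `Q i` by their vector of lengths `k` yields the coefficient of the composition.
-/

open Finset MvPowerSeries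

section Partitions

variable {σ : Type*} [DecidableEq σ]

def multiIndexPartitions (t : σ →₀ ℕ) (m : ℕ) : Finset (Multiset (σ →₀ ℕ)) :=
  (((Iic t).sym m).image Sym.toMultiset).filter fun l => l.sum = t ∧ 0 ∉ l

theorem mem_multiIndexPartitions {t : σ →₀ ℕ} {m : ℕ} {l : Multiset (σ →₀ ℕ)} :
    l ∈ multiIndexPartitions t m ↔ Multiset.card l = m ∧ l.sum = t ∧ 0 ∉ l := by
  simp only [multiIndexPartitions, mem_filter, mem_image, mem_sym_iff]
  constructor
  · rintro ⟨⟨s, -, rfl⟩, hsum, h0⟩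
    exact ⟨s.2, hsum, h0⟩
  · rintro ⟨hcard, hsum, h0⟩
    refine ⟨⟨⟨l, hcard⟩, fun x hx => ?_, rfl⟩, hsum, h0⟩
    exact mem_Iic.mpr (hsum ▸ Multiset.le_sum_of_mem hx)

omit [DecidableEq σ] in
theorem Multiset.card_le_degree_sum {l : Multiset (σ →₀ ℕ)} (h0 : 0 ∉ l) :
    Multiset.card l ≤ l.sum.degree := by
  have hpos : ∀ x ∈ l.map Finsupp.degree, 1 ≤ x := by
    simp only [Multiset.mem_map, forall_exists_index, and_imp, forall_apply_eq_imp_iff₂]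
    exact fun x hx => Nat.one_le_iff_ne_zero.mpr
      ((Finsupp.degree_eq_zero_iff x).not.mpr (ne_of_mem_of_not_mem hx h0))
  simpa [map_multiset_sum] using Multiset.card_nsmul_le_sum hpos

variable {ι : Type*} [Fintype ι] [DecidableEq ι]

def tuplePartitions (t : σ →₀ ℕ) (k : ι → ℕ) : Finset (ι → Multiset (σ →₀ ℕ)) :=
  (finsuppAntidiag univ t).biUnion fun l =>
    Fintype.piFinset fun j => multiIndexPartitions (l j) (k j)

theorem mem_tuplePartitions {t : σ →₀ ℕ} {k : ι → ℕ} {f : ι → Multiset (σ →₀ ℕ)} :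
    f ∈ tuplePartitions t k ↔
      (∀ j, Multiset.card (f j) = k j ∧ 0 ∉ f j) ∧ ∑ j, (f j).sum = t := by
  simp only [tuplePartitions, mem_biUnion, mem_finsuppAntidiag, Fintype.mem_piFinset,
    mem_multiIndexPartitions]
  constructor
  · rintro ⟨l, ⟨hl, -⟩, hf⟩
    refine ⟨fun j => ⟨(hf j).1, (hf j).2.2⟩, ?_⟩
    simpa only [(hf _).2.1] using hl
  · rintro ⟨hf, rfl⟩
    exact ⟨Finsupp.equivFunOnFinite.symm fun j => (f j).sum, ⟨by simp, subset_univ _⟩,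
      fun j => ⟨(hf j).1, by simp, (hf j).2⟩⟩

theorem pairwiseDisjoint_piFinset_multiIndexPartitions (t : σ →₀ ℕ) (k : ι → ℕ) :
    ((finsuppAntidiag univ t : Finset (ι →₀ σ →₀ ℕ)) : Set (ι →₀ σ →₀ ℕ)).PairwiseDisjoint
      fun l => Fintype.piFinset fun j => multiIndexPartitions (l j) (k j) := by
  intro l _ l' _ hne
  refine disjoint_left.mpr fun f hf hf' => hne (Finsupp.ext fun j => ?_)
  rw [← (mem_multiIndexPartitions.mp (Fintype.mem_piFinset.mp hf j)).2.1,
    ← (mem_multiIndexPartitions.mp (Fintype.mem_piFinset.mp hf' j)).2.1]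

theorem tuplePartitions_zero {t : σ →₀ ℕ} (ht : t ≠ 0) :
    tuplePartitions t (0 : ι → ℕ) = ∅ := by
  refine eq_empty_of_forall_notMem fun f hf => ht ?_
  obtain ⟨hpart, rfl⟩ := mem_tuplePartitions.mp hf
  simp [fun j => Multiset.card_eq_zero.mp (hpart j).1]

theorem le_degree_of_mem_tuplePartitions {t : σ →₀ ℕ} {k : ι → ℕ}
    {f : ι → Multiset (σ →₀ ℕ)} (hf : f ∈ tuplePartitions t k) (j : ι) : k j ≤ t.degree := by
  obtain ⟨hpart, rfl⟩ := mem_tuplePartitions.mp hf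
  calc k j = Multiset.card (f j) := (hpart j).1.symm
    _ ≤ (f j).sum.degree := Multiset.card_le_degree_sum (hpart j).2
    _ ≤ ∑ j, (f j).sum.degree :=
      single_le_sum (f := fun j => (f j).sum.degree) (fun _ _ => Nat.zero_le _) (mem_univ j)
    _ = (∑ j, (f j).sum).degree := (map_sum _ _ _).symm

end Partitions

namespace MvPowerSeries

variable {σ R : Type*} [CommSemiring R]

theorem multiset_prod_map_monomial (l : Multiset (σ →₀ ℕ)) (a : (σ →₀ ℕ) → R) :
    (l.map fun x => monomial x (a x)).prod = monomial l.sum (l.map a).prod := by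
  induction l using Multiset.induction_on with
  | empty => simp
  | cons x l ih => simp [ih, monomial_mul_monomial]

variable [DecidableEq σ]

theorem coe_trunc' (φ : MvPowerSeries σ R) (t : σ →₀ ℕ) :
    (trunc' R t φ : MvPowerSeries σ R) = ∑ x ∈ Iic t, monomial x (coeff x φ) := by
  rw [← MvPolynomial.coeToMvPowerSeries.ringHom_apply]
  simp [trunc', truncFinset, MvPolynomial.coe_monomial]

theorem coeff_pow_eq_coeff_trunc'_pow (φ : MvPowerSeries σ R) (t : σ →₀ ℕ) (m : ℕ) :
    coeff t (φ ^ m) = coeff t ((trunc' R t φ : MvPowerSeries σ R) ^ m) := by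
  rcases Nat.eq_zero_or_pos m with rfl | hm
  · simp
  · have := congrArg (MvPolynomial.coeff t) (trunc'_trunc'_pow (n := t) hm φ)
    simpa [coeff_trunc'] using this.symm

theorem coeff_pow_eq_sum_multiIndexPartitions {φ : MvPowerSeries σ R}
    (hφ : constantCoeff φ = 0) (t : σ →₀ ℕ) (m : ℕ) :
    coeff t (φ ^ m) = ∑ l ∈ multiIndexPartitions t m,
      (l.countPerms : R) * (l.map fun x => coeff x φ).prod := by
  rw [coeff_pow_eq_coeff_trunc'_pow, coe_trunc', Finset.sum_pow, map_sum]
  simp only [multiset_prod_map_monomial, ← map_natCast (C (σ := σ) (R := R)), ← smul_eq_C_mul]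
  rw [multiIndexPartitions, sum_filter, sum_image fun _ _ _ _ h => Sym.coe_injective h]
  refine sum_congr rfl fun l _ => ?_
  rw [smul_eq_C_mul, coeff_C_mul, coeff_monomial, mul_ite, mul_zero]
  by_cases h0 : (0 : σ →₀ ℕ) ∈ (l : Multiset (σ →₀ ℕ))
  · have hprod : ((l : Multiset (σ →₀ ℕ)).map fun x => coeff x φ).prod = 0 :=
      Multiset.prod_eq_zero (Multiset.mem_map.mpr ⟨0, h0, hφ⟩)
    simp [h0, hprod]
  · simp only [h0, not_false_eq_true, and_true]
    exact if_congr eq_comm rfl rfl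

theorem coeff_prod_pow_eq_sum_tuplePartitions {ι : Type*} [Fintype ι] [DecidableEq ι]
    {φ : ι → MvPowerSeries σ R} (hφ : ∀ j, constantCoeff (φ j) = 0) (t : σ →₀ ℕ)
    (k : ι → ℕ) :
    coeff t (∏ j, φ j ^ k j) = ∑ f ∈ tuplePartitions t k,
      ∏ j, ((f j).countPerms : R) * ((f j).map fun x => coeff x (φ j)).prod := by
  rw [coeff_prod, tuplePartitions,
    sum_biUnion (pairwiseDisjoint_piFinset_multiIndexPartitions t k)]
  refine sum_congr rfl fun l _ => ?_
  simp_rw [coeff_pow_eq_sum_multiIndexPartitions (hφ _)]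
  exact prod_univ_sum _ _

end MvPowerSeries

section CumulantSeries

variable {d : ℕ}

theorem degB_eq_degree (x : MIdx d) : degB x = x.degree := rfl

theorem coeff_Kof (c : MIdx d → ℝ) (x : MIdx d) :
    coeff x (Kof c) = if x = 0 then 0 else c x / (mifact x : ℝ) := rfl

theorem constantCoeff_Kof (c : MIdx d → ℝ) : constantCoeff (Kof c) = 0 := by
  rw [← coeff_zero_eq_constantCoeff_apply, coeff_Kof, if_pos rfl]

theorem coeff_compSeries {n : ℕ} (cY : (Fin n →₀ ℕ) → ℝ) (K : Fin n → MvPowerSeries (Fin d) ℝ)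
    (i : MIdx d) :
    coeff i (compSeries cY K) =
      ∑ k ∈ Iic (Finsupp.equivFunOnFinite.symm fun _ : Fin n => degB i),
        (if k = 0 then 0 else cY k / (∏ j, ((k j).factorial : ℝ))) *
          coeff i (∏ j, (K j) ^ (k j)) := rfl

theorem multFact_mul_countPerms (l : Multiset (MIdx d)) :
    multFact l * l.countPerms = (Multiset.card l).factorial := by
  rw [multFact, Multiset.countPerms, Finsupp.multinomial_eq, Multiset.toFinsupp_support,
    ← Multiset.toFinset_sum_count_eq]
  exact Nat.multinomial_spec l.toFinset l.count

theorem countPerms_mul_prod_coeff_Kof (c : MIdx d → ℝ) {l : Multiset (MIdx d)} (h0 : 0 ∉ l) :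
    (l.countPerms : ℝ) * (l.map fun x => coeff x (Kof c)).prod =
      (Multiset.card l).factorial * ((l.map c).prod / (multFact l * partFact l)) := by
  have hcoeff : (l.map fun x => coeff x (Kof c)).prod = (l.map c).prod / partFact l := by
    rw [Multiset.map_congr rfl fun x hx => by rw [coeff_Kof, if_neg (ne_of_mem_of_not_mem hx h0)],
      Multiset.prod_map_div, partFact, Nat.cast_multiset_prod, Multiset.map_map]
    rfl
  have hmult : (multFact l : ℝ) ≠ 0 :=
    Nat.cast_ne_zero.mpr (prod_pos fun _ _ => Nat.factorial_pos _).ne'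
  rw [hcoeff, ← multFact_mul_countPerms, Nat.cast_mul]
  field_simp

theorem sum_tuplePartitions_eq_coeff_prod_Kof_pow {n : ℕ} (cY : (Fin n →₀ ℕ) → ℝ)
    (cX : Fin n → MIdx d → ℝ) {i : MIdx d} (hi : i ≠ 0) (k : Fin n →₀ ℕ) :
    ∑ f ∈ tuplePartitions i k,
        cY (Finsupp.equivFunOnFinite.symm fun j => Multiset.card (f j)) *
          ∏ j, ((f j).map (cX j)).prod / ((multFact (f j) : ℝ) * (partFact (f j) : ℝ))
      = (if k = 0 then 0 else cY k / (∏ j, ((k j).factorial : ℝ))) *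
          coeff i (∏ j, Kof (cX j) ^ k j) := by
  rcases eq_or_ne k 0 with rfl | hk
  · simp [tuplePartitions_zero hi]
  rw [if_neg hk, coeff_prod_pow_eq_sum_tuplePartitions fun j => constantCoeff_Kof _, mul_sum]
  refine sum_congr rfl fun f hf => ?_
  obtain ⟨hpart, -⟩ := mem_tuplePartitions.mp hf
  have hfact : (∏ j, ((k j).factorial : ℝ)) ≠ 0 :=
    prod_ne_zero_iff.mpr fun j _ => Nat.cast_ne_zero.mpr (Nat.factorial_ne_zero _)
  simp only [countPerms_mul_prod_coeff_Kof _ (hpart _).2, (hpart _).1, prod_mul_distrib,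
    Finsupp.equivFunOnFinite_symm_coe]
  field_simp

end CumulantSeries

/-- Multivariate Faà di Bruno via cumulant polynomials: if `Y = (Y_1,…,Y_n)`
has joint cumulants `cY` and `X_1, …, X_n` have cumulant sequences `cX j` (cgf's
`K_{X_j}`), then the coefficients of the composition `K_Y(K_{X_1}(z), …, K_{X_n}(z))` are
the umbral evaluations `E[C_{i,(X_1,…,X_n)}(κ_1,…,κ_n)]`, i.e.
`i! ∑_{(λ_1,…,λ_n)} cY(ℓ(λ_1),…,ℓ(λ_n)) ∏_j (∏ c_{λ_j})/(m(λ_j)! λ_j!)`, the sum over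
tuples of multi-index partitions with total sum `i`. -/
theorem faa_di_bruno_cumulant_polynomials {n d : ℕ}
    (cY : (Fin n →₀ ℕ) → ℝ) (cX : Fin n → MIdx d → ℝ)
    (Q : MIdx d → Finset (Fin n → Multiset (MIdx d)))
    (hQ : ∀ (i : MIdx d) (f : Fin n → Multiset (MIdx d)),
      f ∈ Q i ↔ ((∀ k, ∀ x ∈ f k, x ≠ (0 : MIdx d)) ∧ ∑ k, (f k).sum = i))
    (i : MIdx d) (hi : i ≠ 0) :
    (mifact i : ℝ) * ∑ f ∈ Q i,
        cY (Finsupp.equivFunOnFinite.symm fun k => (Multiset.card (f k))) *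
          ∏ k, (((f k).map (cX k)).prod) / ((multFact (f k) : ℝ) * (partFact (f k) : ℝ))
      = (mifact i : ℝ) * MvPowerSeries.coeff i (compSeries cY (fun j => Kof (cX j))) := by
  congr 1
  set lengths : (Fin n → Multiset (MIdx d)) → Fin n →₀ ℕ :=
    fun f => Finsupp.equivFunOnFinite.symm fun k => Multiset.card (f k) with hlengths
  have hfiber : ∀ k, {f ∈ Q i | lengths f = k} = tuplePartitions i k := by
    intro k
    ext f
    have hne : ∀ j, (∀ x ∈ f j, x ≠ 0) ↔ 0 ∉ f j :=
      fun j => ⟨fun h h0 => h 0 h0 rfl, fun h x hx hx0 => h (hx0 ▸ hx)⟩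
    simp only [mem_filter, hQ, mem_tuplePartitions, hlengths, Finsupp.ext_iff,
      Finsupp.equivFunOnFinite_symm_apply_apply, hne, forall_and]
    tauto
  have hmaps : ∀ f ∈ Q i, lengths f ∈ Iic (Finsupp.equivFunOnFinite.symm fun _ => degB i) := by
    intro f hf
    have hf' : f ∈ tuplePartitions i (lengths f) := by
      rw [← hfiber]
      exact mem_filter.mpr ⟨hf, rfl⟩
    exact mem_Iic.mpr fun j => degB_eq_degree i ▸ le_degree_of_mem_tuplePartitions hf' j
  rw [coeff_compSeries, ← sum_fiberwise_of_maps_to hmaps]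
  refine sum_congr rfl fun k _ => ?_
  rw [hfiber, sum_tuplePartitions_eq_coeff_prod_Kof_pow cY cX hi]
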